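/- arXiv:2604.01519 — 4 statements merged into one kernel-verified Lean document; each statement's English description precedes it below -/
import Mathlib

section
/- If f is a continuous real-valued function on [a,b], g is a polynomial of degree at most d, E = max_{x∈[a,b]} |f(x) - g(x)|, and there exist d+2 points a ≤ x₁ < x₂ < ... < x_{d+2} ≤ b and σ ∈ {−1, +1} with f(xᵢ) − g(xᵢ) = σ(−1)ⁱ E for all i, then g minimizes the uniform norm ‖f − p‖_∞ over all polynomials p of degree at most d (the 'sufficiency' direction of the Chebyshev Equioscillation Theorem). -/
/-!
If some `p` of degree `≤ d` had `|f - p| < |f - g|` at every node, then at each node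
`g - p = (f - p) - (f - g)` would have the sign opposite to that of `f - g`. As `f - g` alternates in
sign on the `d + 2` nodes, so would `g - p`, which would then have `d + 1` roots between
consecutive nodes although it is a nonzero polynomial of degree `≤ d`.
-/

open Set Polynomial

theorem exists_mem_Ioo_eq_zero_of_mul_neg {α : Type*} [ConditionallyCompleteLinearOrder α]
    [TopologicalSpace α] [OrderTopology α] [DenselyOrdered α] {f : α → ℝ} {a b : α}
    (hab : a ≤ b) (hf : ContinuousOn f (Icc a b)) (hfab : f a * f b < 0) :
    ∃ c ∈ Ioo a b, f c = 0 := by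
  rcases mul_neg_iff.mp hfab with ⟨hfa, hfb⟩ | ⟨hfa, hfb⟩
  · exact intermediate_value_Ioo' hab hf ⟨hfb, hfa⟩
  · exact intermediate_value_Ioo hab hf ⟨hfa, hfb⟩

theorem Polynomial.le_natDegree_of_mul_eval_neg {n : ℕ} (q : ℝ[X]) {x : Fin (n + 1) → ℝ}
    (hx : StrictMono x) (hsign : ∀ i : Fin n, q.eval (x i.castSucc) * q.eval (x i.succ) < 0) :
    n ≤ q.natDegree := by
  obtain _ | n := n
  · exact Nat.zero_le _
  choose y hy hroot using fun i : Fin (n + 1) =>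
    exists_mem_Ioo_eq_zero_of_mul_neg (hx Fin.castSucc_lt_succ).le q.continuousOn (hsign i)
  have hy_mono : StrictMono y := fun i j hij =>
    calc y i < x i.succ := (hy i).2
      _ ≤ x j.castSucc := hx.monotone (Fin.succ_le_castSucc_iff.mpr hij)
      _ < y j := (hy j).1
  by_contra! hdeg
  have hq : q = 0 := eq_zero_of_natDegree_lt_card_of_eval_eq_zero q hy_mono.injective hroot
    (by rwa [Fintype.card_fin])
  simpa [hq] using hsign 0

theorem sub_mul_neg_of_abs_lt_abs {R : Type*} [Ring R] [LinearOrder R] [IsStrictOrderedRing R]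
    {u v : R} (h : |u| < |v|) : (u - v) * v < 0 := by
  have hv : 0 < |v| := (abs_nonneg u).trans_lt h
  calc (u - v) * v = u * v - |v| * |v| := by rw [abs_mul_abs_self, sub_mul]
    _ ≤ |u| * |v| - |v| * |v| := sub_le_sub_right ((le_abs_self _).trans (abs_mul u v).le) _
    _ < 0 := sub_neg.mpr (mul_lt_mul_of_pos_right h hv)

/-- De la Vallée Poussin's inequality. -/
theorem exists_abs_sub_eval_le_abs_sub_eval {n : ℕ} {x v : Fin (n + 2) → ℝ} (hx : StrictMono x)
    {g p : ℝ[X]} (hg : g.natDegree ≤ n) (hp : p.natDegree ≤ n)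
    (halt : ∀ i : Fin (n + 1),
      (v i.castSucc - g.eval (x i.castSucc)) * (v i.succ - g.eval (x i.succ)) < 0) :
    ∃ i, |v i - g.eval (x i)| ≤ |v i - p.eval (x i)| := by
  by_contra! hbetter
  have hsign i : (g - p).eval (x i) * (v i - g.eval (x i)) < 0 := by
    simpa using sub_mul_neg_of_abs_lt_abs (hbetter i)
  have hdeg := (g - p).le_natDegree_of_mul_eval_neg hx fun i =>
    neg_of_mul_pos_left (by nlinarith [hsign i.castSucc, hsign i.succ, halt i]) (halt i).le
  have := natDegree_sub_le g p
  omega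

theorem chebyshev_equioscillation_sufficiency_general
    (a b : ℝ) (f : ℝ → ℝ)
    (d : ℕ) (g : Polynomial ℝ) (hg : g.natDegree ≤ d)
    (E : ℝ)
    (x : Fin (d + 2) → ℝ) (hx : StrictMono x)
    (hxmem : ∀ i, x i ∈ Set.Icc a b)
    (σ : ℝ) (hσ : σ = 1 ∨ σ = -1)
    (hosc : ∀ i : Fin (d + 2), f (x i) - g.eval (x i) = σ * (-1) ^ ((i : ℕ) + 1) * E) :
    ∀ p : Polynomial ℝ, p.natDegree ≤ d → ∃ y ∈ Set.Icc a b, E ≤ |f y - p.eval y| := by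
  intro p hp
  rcases le_or_gt E 0 with hE | hE
  · exact ⟨x 0, hxmem 0, hE.trans (abs_nonneg _)⟩
  have hσ_abs : |σ| = 1 := by rcases hσ with rfl | rfl <;> simp
  have habs i : |f (x i) - g.eval (x i)| = E := by
    simp [hosc, abs_mul, hσ_abs, abs_of_pos hE]
  have halt (i : Fin (d + 1)) :
      (f (x i.castSucc) - g.eval (x i.castSucc)) * (f (x i.succ) - g.eval (x i.succ)) < 0 := by
    have hflip :
        f (x i.succ) - g.eval (x i.succ) = -(f (x i.castSucc) - g.eval (x i.castSucc)) := by
      simp only [hosc, Fin.val_succ, Fin.val_castSucc, pow_succ]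
      ring
    have hne : f (x i.castSucc) - g.eval (x i.castSucc) ≠ 0 := abs_pos.mp (habs _ ▸ hE)
    rw [hflip, mul_neg, neg_lt_zero]
    exact mul_self_pos.mpr hne
  obtain ⟨i, hi⟩ := exists_abs_sub_eval_le_abs_sub_eval (v := fun i => f (x i)) hx hg hp halt
  exact ⟨x i, hxmem i, habs i ▸ hi⟩

/-- Sufficiency direction of the Chebyshev Equioscillation Theorem. -/
theorem chebyshev_equioscillation_sufficiency
    (a b : ℝ) (hab : a < b) (f : ℝ → ℝ) (hf : ContinuousOn f (Set.Icc a b))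
    (d : ℕ) (g : Polynomial ℝ) (hg : g.natDegree ≤ d)
    (E : ℝ) (hE : IsGreatest ((fun x => |f x - g.eval x|) '' Set.Icc a b) E)
    (x : Fin (d + 2) → ℝ) (hx : StrictMono x)
    (hxmem : ∀ i, x i ∈ Set.Icc a b)
    (σ : ℝ) (hσ : σ = 1 ∨ σ = -1)
    (hosc : ∀ i : Fin (d + 2), f (x i) - g.eval (x i) = σ * (-1) ^ ((i : ℕ) + 1) * E) :
    ∀ p : Polynomial ℝ, p.natDegree ≤ d → ∃ y ∈ Set.Icc a b, E ≤ |f y - p.eval y| :=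
  chebyshev_equioscillation_sufficiency_general a b f d g hg E x hx hxmem σ hσ hosc
end

section
/- Let A_θ be the m×m periodic Jacobi matrix with real diagonal entries a₁,...,a_m, positive off-diagonal entries b₁,...,b_{m−1} on the sub/superdiagonal, and corner entries b_m e^{iθ} (top-right) and b_m e^{−iθ} (bottom-left), with b_m > 0. Then the characteristic polynomial satisfies det(xI − A_θ) = h(x) − e·cos θ, where e = 2·b₁b₂···b_m and h(x) is a monic real polynomial of degree m independent of θ; explicitly h(x) = det(xI − B) − b_m²·det(xI − C), with B the tridiagonal matrix obtained from A_θ by setting b_m = 0, and C the tridiagonal matrix obtained by deleting the first and last rows and columns. -/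
/-- Real symmetric tridiagonal matrix (as a complex matrix) with diagonal `a`
and off-diagonal `b` (only `b i` with `i + 1 < m` is used). -/
def tridiag (m : ℕ) (a b : Fin m → ℝ) : Matrix (Fin m) (Fin m) ℂ :=
  Matrix.of fun i j =>
    if (i : ℕ) = (j : ℕ) then (a i : ℂ)
    else if (i : ℕ) + 1 = (j : ℕ) then (b i : ℂ)
    else if (j : ℕ) + 1 = (i : ℕ) then (b j : ℂ)
    else 0

/-- The `m × m` periodic Jacobi matrix with diagonal `a`, off-diagonal `b`, and
corner entries `b m e^{± i θ}`. -/
noncomputable def periodicJacobi (m : ℕ) (a b : Fin m → ℝ) (θ : ℝ) : Matrix (Fin m) (Fin m) ℂ :=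
  Matrix.of fun i j =>
    if (i : ℕ) = (j : ℕ) then (a i : ℂ)
    else if (i : ℕ) + 1 = (j : ℕ) then (b i : ℂ)
    else if (j : ℕ) + 1 = (i : ℕ) then (b j : ℂ)
    else if (i : ℕ) = 0 ∧ (j : ℕ) = m - 1 then
      (b ⟨m - 1, Nat.sub_lt i.pos one_pos⟩ : ℂ) * Complex.exp (Complex.I * θ)
    else if (j : ℕ) = 0 ∧ (i : ℕ) = m - 1 then
      (b ⟨m - 1, Nat.sub_lt i.pos one_pos⟩ : ℂ) * Complex.exp (-(Complex.I * θ))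
    else 0

/-!
Write `xI - A_θ` as the tridiagonal matrix `T = xI - B` plus the two corner entries
`-b_m e^{iθ}` and `-b_m e^{-iθ}`. Expanding the determinant multilinearly in the first and last
rows gives four terms: `det T`; two terms with a single corner entry, whose complementary minors
are triangular with diagonal `-b₁, …, -b_{m-1}` and which together contribute
`-b₁ ⋯ b_m (e^{iθ} + e^{-iθ}) = -e cos θ`; and the term with both corner entries, which is
`-b_m² det(xI - C)`. Taking `h = χ_B - b_m² χ_C` for the real characteristic polynomials,
`h` is monic of degree `m` because `C` has size `m - 2`.
-/

namespace Matrix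

variable {R : Type*} [CommRing R]

theorem det_updateRow_single {n : ℕ} (A : Matrix (Fin (n + 1)) (Fin (n + 1)) R)
    (i j : Fin (n + 1)) (c : R) :
    (A.updateRow i (Pi.single j c)).det
      = (-1) ^ (i + j : ℕ) * c * (A.submatrix i.succAbove j.succAbove).det := by
  rw [← mul_one c, ← smul_eq_mul, Pi.single_smul', det_updateRow_smul, ← adjugate_apply,
    adjugate_fin_succ_eq_det_submatrix]
  ring

theorem det_updateRow_add_updateRow_add {n : Type*} [DecidableEq n] [Fintype n]
    (M : Matrix n n R) {i i' : n} (h : i ≠ i') (u v : n → R) :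
    ((M.updateRow i (M i + u)).updateRow i' (M i' + v)).det
      = M.det + (M.updateRow i u).det + (M.updateRow i' v).det
        + ((M.updateRow i' v).updateRow i u).det := by
  have hv : (M.updateRow i' v).updateRow i (M i) = M.updateRow i' v := by
    rw [← updateRow_comm _ h, updateRow_eq_self]
  rw [det_updateRow_add, updateRow_comm _ h, updateRow_eq_self, det_updateRow_add,
    updateRow_eq_self, updateRow_comm _ h, det_updateRow_add, hv]
  ring

theorem det_add_single_corners {n : ℕ} (M : Matrix (Fin (n + 2)) (Fin (n + 2)) R) (α β : R) :
    (M + single 0 (Fin.last _) α + single (Fin.last _) 0 β).det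
      = M.det + (-1) ^ (n + 1) * α * (M.submatrix Fin.succ Fin.castSucc).det
        + (-1) ^ (n + 1) * β * (M.submatrix Fin.castSucc Fin.succ).det
        - α * β * (M.submatrix (fun i : Fin n => i.castSucc.succ)
            (fun i : Fin n => i.castSucc.succ)).det := by
  have h0L : (0 : Fin (n + 2)) ≠ Fin.last _ := Fin.last_pos.ne
  have hM : M + single 0 (Fin.last _) α + single (Fin.last _) 0 β
      = (M.updateRow 0 (M 0 + Pi.single (Fin.last _) α)).updateRow (Fin.last _)
          (M (Fin.last _) + Pi.single 0 β) := by
    ext i j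
    rcases eq_or_ne i (Fin.last _) with rfl | hiL
    · simp [single_apply, Pi.single_apply, h0L.symm, eq_comm]
    rcases eq_or_ne i 0 with rfl | hi0
    · simp [single_apply, Pi.single_apply, h0L, eq_comm]
    · simp [hiL, hi0, Ne.symm hiL, Ne.symm hi0]
  have hcorner : (M.updateRow (Fin.last _) (Pi.single 0 β)).submatrix Fin.succ Fin.castSucc
      = (M.submatrix Fin.succ Fin.castSucc).updateRow (Fin.last _) (Pi.single 0 β) := by
    ext i j
    rcases eq_or_ne i (Fin.last _) with rfl | hi
    · simp [Pi.single_apply]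
    · simp [hi]
  have hsign : ((-1 : R)) ^ (n + 1) * (-1) ^ n = -1 := by
    rw [← pow_add]; exact Odd.neg_one_pow ⟨n, by ring⟩
  rw [hM, det_updateRow_add_updateRow_add _ h0L, det_updateRow_single, det_updateRow_single,
    det_updateRow_single]
  simp only [Fin.succAbove_zero, Fin.succAbove_last, Fin.val_zero, Fin.val_last]
  rw [hcorner, det_updateRow_single]
  simp only [Fin.succAbove_zero, Fin.succAbove_last, Fin.val_zero, Fin.val_last,
    submatrix_submatrix, Function.comp_def, Fin.castSucc_succ, zero_add, add_zero]
  linear_combination α * β * (M.submatrix (fun i : Fin n => i.castSucc.succ)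
    (fun i : Fin n => i.castSucc.succ)).det * hsign

end Matrix

theorem smul_one_sub_tridiag_apply {m : ℕ} (a b : Fin m → ℝ) (x : ℂ) (i j : Fin m) :
    (x • (1 : Matrix (Fin m) (Fin m) ℂ) - tridiag m a b) i j =
      if (i : ℕ) = j then x - a i
      else if (i : ℕ) + 1 = j then -(b i : ℂ)
      else if (j : ℕ) + 1 = i then -(b j : ℂ)
      else 0 := by
  simp only [Matrix.sub_apply, Matrix.smul_apply, Matrix.one_apply, tridiag, Matrix.of_apply,
    Fin.ext_iff, smul_eq_mul]
  split_ifs <;> simp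

section Tridiagonal

variable {n : ℕ} (a b : Fin (n + 2) → ℝ) (x : ℂ)

theorem det_smul_one_sub_tridiag_submatrix_succ_castSucc :
    ((x • (1 : Matrix _ _ ℂ) - tridiag (n + 2) a b).submatrix Fin.succ Fin.castSucc).det
      = (-1) ^ (n + 1) * ∏ i : Fin (n + 1), (b i.castSucc : ℂ) := by
  rw [Matrix.det_of_isUpperTriangular]
  · simp only [Matrix.submatrix_apply, smul_one_sub_tridiag_apply, Fin.val_succ, Fin.val_castSucc]
    simp [Finset.prod_neg, add_assoc]
  · intro i j hij
    have : (j : ℕ) < i := hij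
    simp only [Matrix.submatrix_apply, smul_one_sub_tridiag_apply, Fin.val_succ, Fin.val_castSucc]
    split_ifs <;> first | omega | rfl

theorem det_smul_one_sub_tridiag_submatrix_castSucc_succ :
    ((x • (1 : Matrix _ _ ℂ) - tridiag (n + 2) a b).submatrix Fin.castSucc Fin.succ).det
      = (-1) ^ (n + 1) * ∏ i : Fin (n + 1), (b i.castSucc : ℂ) := by
  rw [Matrix.det_of_isLowerTriangular]
  · simp only [Matrix.submatrix_apply, smul_one_sub_tridiag_apply, Fin.val_succ, Fin.val_castSucc]
    simp [Finset.prod_neg]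
  · intro i j hij
    have : (i : ℕ) < j := hij
    simp only [Matrix.submatrix_apply, smul_one_sub_tridiag_apply, Fin.val_succ, Fin.val_castSucc]
    split_ifs <;> first | omega | rfl

theorem smul_one_sub_tridiag_submatrix_interior :
    (x • (1 : Matrix _ _ ℂ) - tridiag (n + 2) a b).submatrix (fun i : Fin n => i.castSucc.succ)
        (fun i : Fin n => i.castSucc.succ)
      = x • (1 : Matrix _ _ ℂ)
          - tridiag n (fun i => a i.castSucc.succ) (fun i => b i.castSucc.succ) := by
  ext i j
  simp only [Matrix.submatrix_apply, smul_one_sub_tridiag_apply, Fin.val_succ, Fin.val_castSucc]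
  split_ifs <;> first | omega | rfl

end Tridiagonal

theorem periodicJacobi_eq_tridiag_add_single (n : ℕ) (a b : Fin (n + 3) → ℝ) (θ : ℝ) :
    periodicJacobi (n + 3) a b θ = tridiag (n + 3) a b
      + Matrix.single 0 (Fin.last _) (b (Fin.last _) * Complex.exp (Complex.I * θ))
      + Matrix.single (Fin.last _) 0 (b (Fin.last _) * Complex.exp (-(Complex.I * θ))) := by
  ext i j
  simp only [periodicJacobi, tridiag, Matrix.add_apply, Matrix.single_apply, Matrix.of_apply,
    Fin.ext_iff, Fin.val_last, Fin.val_zero]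
  split_ifs <;> first | omega | simp [Fin.last]

theorem det_smul_one_sub_periodicJacobi (n : ℕ) (a b : Fin (n + 3) → ℝ) (θ : ℝ) (x : ℂ) :
    (x • (1 : Matrix _ _ ℂ) - periodicJacobi (n + 3) a b θ).det
      = (x • (1 : Matrix _ _ ℂ) - tridiag (n + 3) a b).det
        - (b (Fin.last _) : ℂ) ^ 2 * (x • (1 : Matrix _ _ ℂ)
            - tridiag (n + 1) (fun i => a i.castSucc.succ) (fun i => b i.castSucc.succ)).det
        - 2 * (∏ t, (b t : ℂ)) * Real.cos θ := by
  set c₁ := (b (Fin.last _) : ℂ) * Complex.exp (Complex.I * θ)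
  set c₂ := (b (Fin.last _) : ℂ) * Complex.exp (-(Complex.I * θ))
  have hM : x • (1 : Matrix _ _ ℂ) - periodicJacobi (n + 3) a b θ
      = (x • 1 - tridiag (n + 3) a b) + Matrix.single 0 (Fin.last _) (-c₁)
        + Matrix.single (Fin.last _) 0 (-c₂) := by
    rw [periodicJacobi_eq_tridiag_add_single, ← Matrix.single_neg, ← Matrix.single_neg]
    abel
  have hprod : ∏ t, (b t : ℂ) = (∏ i : Fin (n + 2), (b i.castSucc : ℂ)) * b (Fin.last _) :=
    Fin.prod_univ_castSucc _
  have hsign : ((-1 : ℂ)) ^ (n + 2) * (-1) ^ (n + 2) = 1 := by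
    rw [← pow_add]; exact Even.neg_one_pow ⟨n + 2, rfl⟩
  have hc₁c₂ : c₁ * c₂ = (b (Fin.last _) : ℂ) ^ 2 := by
    rw [mul_mul_mul_comm, ← Complex.exp_add, add_neg_cancel, Complex.exp_zero, mul_one, sq]
  have hcos : c₁ + c₂ = 2 * Real.cos θ * b (Fin.last _) := by
    rw [Complex.ofReal_cos, Complex.two_cos]
    simp only [c₁, c₂]
    ring_nf
  rw [hM, Matrix.det_add_single_corners, det_smul_one_sub_tridiag_submatrix_succ_castSucc,
    det_smul_one_sub_tridiag_submatrix_castSucc_succ, smul_one_sub_tridiag_submatrix_interior,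
    hprod]
  linear_combination (-(∏ i : Fin (n + 2), (b i.castSucc : ℂ)) * (c₁ + c₂)) * hsign
    - (x • (1 : Matrix _ _ ℂ) - tridiag (n + 1) (fun i => a i.castSucc.succ)
        (fun i => b i.castSucc.succ)).det * hc₁c₂
    - (∏ i : Fin (n + 2), (b i.castSucc : ℂ)) * hcos

def tridiagReal (m : ℕ) (a b : Fin m → ℝ) : Matrix (Fin m) (Fin m) ℝ :=
  Matrix.of fun i j =>
    if (i : ℕ) = (j : ℕ) then a i
    else if (i : ℕ) + 1 = (j : ℕ) then b i
    else if (j : ℕ) + 1 = (i : ℕ) then b j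
    else 0

theorem tridiagReal_map (m : ℕ) (a b : Fin m → ℝ) :
    (tridiagReal m a b).map (algebraMap ℝ ℂ) = tridiag m a b := by
  ext i j
  simp only [tridiag, tridiagReal, Matrix.map_apply, Matrix.of_apply]
  split_ifs <;> simp

theorem ofReal_eval_charpoly_tridiagReal (m : ℕ) (a b : Fin m → ℝ) (x : ℝ) :
    (((tridiagReal m a b).charpoly.eval x : ℝ) : ℂ)
      = ((x : ℂ) • (1 : Matrix _ _ ℂ) - tridiag m a b).det := by
  rw [← tridiagReal_map, Matrix.smul_one_eq_diagonal, ← Matrix.scalar_apply,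
    ← Matrix.eval_charpoly, Matrix.charpoly_map]
  exact (Polynomial.eval_map_apply (algebraMap ℝ ℂ) x).symm

/-- Characteristic polynomial of a periodic Jacobi matrix:
`det(xI − A_θ) = h(x) − e cos θ` with `h` monic of degree `m` independent of `θ`,
`h(x) = det(xI − B) − b_m² det(xI − C)`, `e = 2 b₁ ⋯ b_m`. -/
theorem periodicJacobi_charpoly
    (m : ℕ) (hm : 3 ≤ m) (a b : Fin m → ℝ)
    (θ : ℝ) :
    ∃ h : Polynomial ℝ, h.Monic ∧ h.natDegree = m ∧
      (∀ x : ℝ,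
        ((x : ℂ) • (1 : Matrix (Fin m) (Fin m) ℂ) - periodicJacobi m a b θ).det
          = ((h.eval x : ℝ) : ℂ) - (2 * ∏ t, (b t : ℂ)) * (Real.cos θ : ℂ)) ∧
      (∀ x : ℝ,
        ((h.eval x : ℝ) : ℂ)
          = ((x : ℂ) • (1 : Matrix (Fin m) (Fin m) ℂ) - tridiag m a b).det
            - (b ⟨m - 1, by omega⟩ : ℂ) ^ 2 *
              ((x : ℂ) • (1 : Matrix (Fin (m - 2)) (Fin (m - 2)) ℂ)
                - tridiag (m - 2) (fun i => a ⟨(i : ℕ) + 1, by omega⟩)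
                    (fun i => b ⟨(i : ℕ) + 1, by omega⟩)).det) := by
  obtain ⟨n, rfl⟩ : ∃ n, m = n + 3 := ⟨m - 3, by omega⟩
  set p := (tridiagReal (n + 3) a b).charpoly
  set q := (tridiagReal (n + 1) (fun i => a i.castSucc.succ) (fun i => b i.castSucc.succ)).charpoly
  set c := b (Fin.last _) ^ 2
  have hdeg : (c • q).degree < p.degree := by
    refine (Polynomial.degree_smul_le c q).trans_lt ?_
    rw [Matrix.charpoly_degree_eq_dim, Matrix.charpoly_degree_eq_dim, Fintype.card_fin,
      Fintype.card_fin]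
    exact_mod_cast (by omega : n + 1 < n + 3)
  have heval : ∀ x : ℝ, (((p - c • q).eval x : ℝ) : ℂ)
      = ((x : ℂ) • (1 : Matrix _ _ ℂ) - tridiag (n + 3) a b).det
        - (b (Fin.last _) : ℂ) ^ 2 * ((x : ℂ) • (1 : Matrix _ _ ℂ)
            - tridiag (n + 1) (fun i => a i.castSucc.succ) (fun i => b i.castSucc.succ)).det := by
    intro x
    simp only [Polynomial.eval_sub, Polynomial.eval_smul, smul_eq_mul, Complex.ofReal_sub,
      Complex.ofReal_mul, p, q, c, ofReal_eval_charpoly_tridiagReal]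
    push_cast
    ring
  refine ⟨p - c • q, (Matrix.charpoly_monic _).sub_of_left hdeg, ?_, fun x => ?_, heval⟩
  · rw [Polynomial.natDegree_eq_of_degree_eq (Polynomial.degree_sub_eq_left_of_degree_lt hdeg),
      Matrix.charpoly_natDegree_eq_dim, Fintype.card_fin]
  · rw [det_smul_one_sub_periodicJacobi, heval]
end

section
/- Let Δ be a real polynomial of degree d admitting d+1 points x₁ < ... < x_{d+1} in [−1,1] at which Δ alternates sign with |Δ(xᵢ)| ≥ 1. If A is a Hermitian matrix whose characteristic polynomial equals c·(Δ(x) − cos θ) for some c ≠ 0 and θ ∈ ℝ, then every eigenvalue of A lies in [x₁, x_{d+1}] ⊆ [−1,1]; in particular ‖A‖ ≤ 1 (operator norm). -/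
/-!
Since `Δ` changes sign between consecutive points `xᵢ`, it has a root `rⱼ` in each of the `d`
intervals `(xⱼ, xⱼ₊₁)`; having degree `d`, it factors as `Δ = lc · ∏ⱼ (X - rⱼ)` with every
`rⱼ ∈ (x₀, x_d)`. Beyond an endpoint each factor `|t - rⱼ|` exceeds its value at that endpoint,
so `|Δ t| > |Δ xᵢ| ≥ 1 ≥ |cos θ|` for `t ∉ [x₀, x_d]`. The eigenvalues of the Hermitian `A` are
real roots of `c (Δ - cos θ)`, hence lie in `[x₀, x_d]`.
-/

open Polynomial Set

namespace Polynomial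

variable {K : Type*} [Field K]

theorem eq_C_leadingCoeff_mul_prod_X_sub_C {ι : Type*} [Fintype ι] {p : K[X]}
    (hdeg : p.natDegree ≤ Fintype.card ι) {r : ι → K} (hr : Function.Injective r)
    (hroot : ∀ i, p.IsRoot (r i)) :
    p = C p.leadingCoeff * ∏ i, (X - C (r i)) :=
  eq_leadingCoeff_mul_of_monic_of_dvd_of_natDegree_le
    (monic_prod_of_monic _ _ fun i _ => monic_X_sub_C (r i))
    (Fintype.prod_dvd_of_coprime (pairwise_coprime_X_sub_C hr) fun i =>
      dvd_iff_isRoot.mpr (hroot i))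
    (by rwa [natDegree_finsetProd_X_sub_C_eq_card, Finset.card_univ])

theorem abs_eval_lt_abs_eval_of_eq_C_mul_prod [LinearOrder K] [IsStrictOrderedRing K]
    {ι : Type*} [Fintype ι] [Nonempty ι] {p : K[X]} {a : K} {r : ι → K}
    (hp : p = C a * ∏ i, (X - C (r i))) (ha : a ≠ 0) {u v : K}
    (huv : ∀ i, 0 < |u - r i| ∧ |u - r i| < |v - r i|) :
    |p.eval u| < |p.eval v| := by
  simp only [hp, eval_mul, eval_C, eval_prod, eval_sub, eval_X, abs_mul, Finset.abs_prod]
  exact mul_lt_mul_of_pos_left (Finset.prod_lt_prod_of_nonempty (fun i _ => (huv i).1)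
    (fun i _ => (huv i).2) Finset.univ_nonempty) (abs_pos.mpr ha)

theorem exists_isRoot_mem_Ioo_of_eval_mul_neg (p : ℝ[X]) {a b : ℝ} (hab : a ≤ b)
    (h : p.eval a * p.eval b < 0) : ∃ r ∈ Ioo a b, p.IsRoot r := by
  have hcont : ContinuousOn (fun t => p.eval t) (Icc a b) := p.continuous.continuousOn
  rcases mul_neg_iff.mp h with ⟨ha, hb⟩ | ⟨ha, hb⟩
  · exact intermediate_value_Ioo' hab hcont ⟨hb, ha⟩
  · exact intermediate_value_Ioo hab hcont ⟨ha, hb⟩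

variable {n : ℕ} {p : ℝ[X]} {x : Fin (n + 1) → ℝ}

theorem exists_strictMono_isRoot_of_alternating (hx : StrictMono x)
    (halt : ∀ i : Fin n, p.eval (x i.castSucc) * p.eval (x i.succ) < 0) :
    ∃ r : Fin n → ℝ, StrictMono r ∧ (∀ i, r i ∈ Ioo (x i.castSucc) (x i.succ)) ∧
      ∀ i, p.IsRoot (r i) := by
  choose r hrx hroot using fun i =>
    exists_isRoot_mem_Ioo_of_eval_mul_neg p (hx.monotone (Fin.castSucc_le_succ i)) (halt i)
  refine ⟨r, fun i j hij => ?_, hrx, hroot⟩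
  calc r i < x i.succ := (hrx i).2
    _ ≤ x j.castSucc := hx.monotone (Fin.succ_le_castSucc_iff.mpr hij)
    _ < r j := (hrx j).1

theorem exists_abs_eval_lt_of_alternating_of_notMem_Icc (hn : 0 < n) (hdeg : p.natDegree ≤ n)
    (hx : StrictMono x) (halt : ∀ i : Fin n, p.eval (x i.castSucc) * p.eval (x i.succ) < 0)
    {μ : ℝ} (hμ : μ ∉ Icc (x 0) (x (Fin.last n))) : ∃ i, |p.eval (x i)| < |p.eval μ| := by
  have : Nonempty (Fin n) := ⟨⟨0, hn⟩⟩
  have hp : p ≠ 0 := by rintro rfl; simpa using halt ⟨0, hn⟩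
  obtain ⟨r, hr, hrx, hroot⟩ := exists_strictMono_isRoot_of_alternating hx halt
  have hfac := eq_C_leadingCoeff_mul_prod_X_sub_C (by simpa using hdeg) hr.injective hroot
  have hlo : ∀ i, x 0 < r i := fun i => (hx.monotone (Fin.zero_le _)).trans_lt (hrx i).1
  have hhi : ∀ i, r i < x (Fin.last n) := fun i => (hrx i).2.trans_le (hx.monotone (Fin.le_last _))
  rcases not_and_or.mp hμ with hμ | hμ <;> push Not at hμ
  · refine ⟨0, abs_eval_lt_abs_eval_of_eq_C_mul_prod hfac (leadingCoeff_ne_zero.mpr hp) fun i => ?_⟩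
    rw [abs_of_neg (sub_neg.mpr (hlo i)), abs_of_neg (sub_neg.mpr (hμ.trans (hlo i)))]
    constructor <;> linarith [hlo i]
  · refine ⟨Fin.last n,
      abs_eval_lt_abs_eval_of_eq_C_mul_prod hfac (leadingCoeff_ne_zero.mpr hp) fun i => ?_⟩
    rw [abs_of_pos (sub_pos.mpr (hhi i)), abs_of_pos (sub_pos.mpr ((hhi i).trans hμ))]
    constructor <;> linarith [hhi i]

end Polynomial

theorem Matrix.IsHermitian.isRoot_charpoly_eigenvalues {𝕜 : Type*} [RCLike 𝕜] {n : Type*}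
    [Fintype n] [DecidableEq n] {A : Matrix n n 𝕜} (hA : A.IsHermitian) (i : n) :
    A.charpoly.IsRoot (hA.eigenvalues i) := by
  rw [hA.charpoly_eq, IsRoot, eval_prod]
  exact Finset.prod_eq_zero (Finset.mem_univ i) (by simp)

/-- If a Hermitian matrix `A` has characteristic polynomial `c (Δ(x) − cos θ)`
where `Δ` alternates with magnitude `≥ 1` at `d+1` points of `[−1,1]`, then all
eigenvalues of `A` lie in `[x₁, x_{d+1}] ⊆ [−1,1]`; in particular all
eigenvalues have absolute value at most `1`. -/
theorem eigenvalues_in_interval_of_discriminant_charpoly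
    (d : ℕ) (hd : 1 ≤ d) (Δ : Polynomial ℝ) (hdeg : Δ.natDegree = d)
    (x : Fin (d + 1) → ℝ) (hx : StrictMono x)
    (hxmem : ∀ i, x i ∈ Set.Icc (-1 : ℝ) 1)
    (halt : ∀ i : Fin d, Δ.eval (x i.castSucc) * Δ.eval (x i.succ) < 0)
    (hbig : ∀ i, 1 ≤ |Δ.eval (x i)|)
    (A : Matrix (Fin d) (Fin d) ℂ) (hA : A.IsHermitian)
    (c : ℂ) (hc : c ≠ 0) (θ : ℝ)
    (hchar : ∀ z : ℂ, A.charpoly.eval z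
      = c * ((Δ.map (algebraMap ℝ ℂ)).eval z - (Real.cos θ : ℂ))) :
    (∀ i, hA.eigenvalues i ∈ Set.Icc (x 0) (x (Fin.last d))) ∧
      ∀ i, |hA.eigenvalues i| ≤ 1 := by
  have heig : ∀ i, Δ.eval (hA.eigenvalues i) = Real.cos θ := by
    intro i
    have h := (hA.isRoot_charpoly_eigenvalues i).eq_zero
    rw [hchar, mul_eq_zero_iff_left hc,
      sub_eq_zero, eval_map_algebraMap, aeval_algebraMap_apply_eq_algebraMap_eval] at h
    exact Complex.ofReal_injective h
  have hmem : ∀ i, hA.eigenvalues i ∈ Icc (x 0) (x (Fin.last d)) := by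
    intro i
    by_contra hout
    obtain ⟨j, hj⟩ := exists_abs_eval_lt_of_alternating_of_notMem_Icc hd hdeg.le hx halt hout
    rw [heig] at hj
    linarith [hbig j, Real.abs_cos_le_one θ]
  exact ⟨hmem, fun i => abs_le.mpr ⟨(hxmem 0).1.trans (hmem i).1, (hmem i).2.trans (hxmem _).2⟩⟩
end

section
/- Let A_θ be the m×m periodic Jacobi matrix with parameters a_t ∈ ℝ, b_t > 0 and phase θ, and let P be a polynomial of degree strictly less than m. Then tr[P(A_θ)] is independent of θ; in particular tr[P(A_θ)] = tr[P(A_0)] for all θ. -/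
open Polynomial Matrix

theorem Matrix.trace_aeval_eq_of_trace_pow_eq {R S n : Type*} [CommSemiring R] [CommSemiring S]
    [Algebra R S] [Fintype n] [DecidableEq n] {A B : Matrix n n S} {P : R[X]}
    (h : ∀ k ≤ P.natDegree, trace (A ^ k) = trace (B ^ k)) :
    trace (aeval A P) = trace (aeval B P) := by
  simp only [aeval_eq_sum_range, trace_sum, trace_smul]
  exact Finset.sum_congr rfl fun k hk => by
    rw [h k (Nat.lt_succ_iff.mp (Finset.mem_range.mp hk))]

theorem Matrix.trace_pow_eq_of_isUnit_mul_eq_mul {R n : Type*} [CommSemiring R] [Fintype n]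
    [DecidableEq n] {S A B : Matrix n n R} (hS : IsUnit S) (h : S * A = B * S) (k : ℕ) :
    trace (A ^ k) = trace (B ^ k) := by
  obtain ⟨S, rfl⟩ := hS
  have hk : (S : Matrix n n R) * A ^ k = B ^ k * S := SemiconjBy.pow_right h k
  rw [← trace_units_conj S (A ^ k), hk, Units.mul_inv_cancel_right]

theorem Matrix.natDegree_pow_apply_le {R n : Type*} [CommSemiring R] [Fintype n] [DecidableEq n]
    {M : Matrix n n R[X]} {d : ℕ} (hM : ∀ i j, (M i j).natDegree ≤ d) (k : ℕ) (i j : n) :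
    ((M ^ k) i j).natDegree ≤ d * k := by
  induction k generalizing j with
  | zero => by_cases hij : i = j <;> simp [hij]
  | succ k ih =>
    rw [pow_succ, mul_apply, mul_add, mul_one]
    exact natDegree_sum_le_of_forall_le _ _ fun l _ =>
      natDegree_mul_le.trans (add_le_add (ih l) (hM l j))

theorem IsPrimitiveRoot.pow_ne_pow_of_lt_add {M : Type*} [CommMonoid M] {ζ : M} {m j k : ℕ}
    (hζ : IsPrimitiveRoot ζ m) (hk : k < m) (hj : j < k + m) (hjk : j ≠ k) : ζ ^ j ≠ ζ ^ k := by
  rw [Ne, (hζ.isOfFinOrder (by omega)).pow_eq_pow_iff_modEq, ← hζ.eq_orderOf]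
  intro hmod
  rcases le_total k j with hkj | hjk'
  · have := Nat.eq_zero_of_dvd_of_lt ((Nat.modEq_iff_dvd' hkj).1 hmod.symm) (by omega)
    omega
  · have := Nat.eq_zero_of_dvd_of_lt ((Nat.modEq_iff_dvd' hjk').1 hmod) (by omega)
    omega

theorem Polynomial.eq_C_mul_X_pow_of_comp_C_mul_X_eq {K : Type*} [CommRing K] [IsDomain K]
    {ζ : K} {m k : ℕ} (hζ : IsPrimitiveRoot ζ m) (hk : k < m) {p : K[X]}
    (hp : p.natDegree < k + m) (h : p.comp (C ζ * X) = C (ζ ^ k) * p) :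
    p = C (p.coeff k) * X ^ k := by
  ext j
  rw [coeff_C_mul_X_pow]
  split_ifs with hjk
  · rw [hjk]
  by_contra hne
  refine hζ.pow_ne_pow_of_lt_add hk ((le_natDegree_of_ne_zero hne).trans_lt hp) hjk ?_
  have hj := congrArg (coeff · j) h
  simp only [comp_C_mul_X_coeff, coeff_C_mul] at hj
  exact mul_left_cancel₀ hne (hj.trans (mul_comm _ _))

theorem Matrix.isUnit_diagonal_pow {n K : Type*} [Fintype n] [DecidableEq n] [Field K]
    {c : K} (hc : c ≠ 0) (e : n → ℕ) : IsUnit (diagonal fun t => c ^ e t) :=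
  isUnit_diagonal.2 (Pi.isUnit_iff.2 fun _ => (IsUnit.mk0 c hc).pow _)

section LaurentPencil

variable {n K : Type*} [Field K]

def laurentPencil (D F B : Matrix n n K) (z : K) : Matrix n n K := D + z • F + z⁻¹ • B

noncomputable def polynomialPencil (D F B : Matrix n n K) : Matrix n n K[X] :=
  (X : K[X]) • D.map C + (X ^ 2 : K[X]) • F.map C + B.map C

theorem polynomialPencil_map_eval (D F B : Matrix n n K) {z : K} (hz : z ≠ 0) :
    (polynomialPencil D F B).map (eval z) = z • laurentPencil D F B z := by
  ext i j
  simp [polynomialPencil, laurentPencil]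
  field_simp

theorem natDegree_polynomialPencil_apply_le (D F B : Matrix n n K) (i j : n) :
    (polynomialPencil D F B i j).natDegree ≤ 2 := by
  simp only [polynomialPencil, Matrix.add_apply, Matrix.smul_apply, map_apply, smul_eq_mul]
  compute_degree

variable [Fintype n] [DecidableEq n]

theorem eval_trace_pow_polynomialPencil (D F B : Matrix n n K) (k : ℕ) {z : K} (hz : z ≠ 0) :
    eval z (trace (polynomialPencil D F B ^ k)) = z ^ k * trace (laurentPencil D F B z ^ k) := by
  calc eval z (trace (polynomialPencil D F B ^ k))
      = trace ((polynomialPencil D F B).map (eval z) ^ k) := by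
        rw [← coe_evalRingHom, AddMonoidHom.map_trace, ← RingHom.mapMatrix_apply, map_pow]
        rfl
    _ = z ^ k * trace (laurentPencil D F B z ^ k) := by
        rw [polynomialPencil_map_eval D F B hz, _root_.smul_pow, trace_smul, smul_eq_mul]

theorem mul_laurentPencil_eq {S D F B : Matrix n n K} {c : K} (hD : S * D = D * S)
    (hF : S * F = (c⁻¹ • F) * S) (hB : S * B = (c • B) * S) (z : K) :
    S * laurentPencil D F B z = laurentPencil D F B (c⁻¹ * z) * S := by
  simp only [laurentPencil, mul_add, add_mul, Matrix.mul_smul, Matrix.smul_mul, hD, hF, hB,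
    smul_smul, mul_inv, inv_inv]
  ring_nf

theorem trace_pow_laurentPencil_eq [Infinite K] {S D F B : Matrix n n K} {ζ : K} {m k : ℕ}
    (hζ : IsPrimitiveRoot ζ m) (hk : k < m) (hS : IsUnit S) (hD : S * D = D * S)
    (hF : S * F = (ζ⁻¹ • F) * S) (hB : S * B = (ζ • B) * S) {z w : K} (hz : z ≠ 0)
    (hw : w ≠ 0) : trace (laurentPencil D F B z ^ k) = trace (laurentPencil D F B w ^ k) := by
  set G := trace (polynomialPencil D F B ^ k)
  have hdeg : G.natDegree < k + m := by
    calc G.natDegree ≤ 2 * k := natDegree_sum_le_of_forall_le _ _ fun i _ =>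
          natDegree_pow_apply_le (natDegree_polynomialPencil_apply_le D F B) k i i
      _ < k + m := by omega
  have hcomp : G.comp (C ζ⁻¹ * X) = C (ζ⁻¹ ^ k) * G := by
    refine eq_of_infinite_eval_eq _ _ ((Set.finite_singleton 0).infinite_compl.mono fun u hu => ?_)
    have hζu : ζ⁻¹ * u ≠ 0 := mul_ne_zero (inv_ne_zero (hζ.ne_zero (by omega))) hu
    simp only [Set.mem_ofPred_eq, eval_comp, eval_mul, eval_C, eval_X]
    rw [eval_trace_pow_polynomialPencil D F B k hζu, eval_trace_pow_polynomialPencil D F B k hu,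
      ← trace_pow_eq_of_isUnit_mul_eq_mul hS (mul_laurentPencil_eq hD hF hB u), mul_pow,
      mul_assoc]
  have hG := eq_C_mul_X_pow_of_comp_C_mul_X_eq hζ.inv hk hdeg hcomp
  have htrace : ∀ u ≠ 0, trace (laurentPencil D F B u ^ k) = G.coeff k := fun u hu =>
    mul_left_cancel₀ (pow_ne_zero k hu) <| by
      calc u ^ k * trace (laurentPencil D F B u ^ k) = eval u G :=
            (eval_trace_pow_polynomialPencil D F B k hu).symm
        _ = eval u (C (G.coeff k) * X ^ k) := congrArg (eval u) hG
        _ = u ^ k * G.coeff k := by rw [eval_mul, eval_C, eval_pow, eval_X, mul_comm]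
  rw [htrace z hz, htrace w hw]

end LaurentPencil

section WeightedCycle

variable {m : ℕ} {K : Type*} [Field K]

def weightedCycle (w : Fin m → K) : Matrix (Fin m) (Fin m) K :=
  of fun i j => if (j : ℕ) = ((i : ℕ) + 1) % m then w i else 0

theorem diagonal_pow_mul_weightedCycle {c : K} (hc : c ^ m = 1) (w : Fin m → K) :
    diagonal (fun t : Fin m => c ^ (t : ℕ)) * weightedCycle w
      = (c⁻¹ • weightedCycle w) * diagonal (fun t : Fin m => c ^ (t : ℕ)) := by
  ext i j
  have hc0 : c ≠ 0 := (IsUnit.of_pow_eq_one hc i.pos.ne').ne_zero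
  simp only [diagonal_mul, mul_diagonal, Matrix.smul_apply, weightedCycle, of_apply, smul_eq_mul]
  split_ifs with h
  · rw [h, ← pow_eq_pow_mod _ hc, pow_succ]
    field_simp
  · simp

theorem diagonal_pow_mul_transpose_weightedCycle {c : K} (hc : c ^ m = 1) (w : Fin m → K) :
    diagonal (fun t : Fin m => c ^ (t : ℕ)) * (weightedCycle w)ᵀ
      = (c • (weightedCycle w)ᵀ) * diagonal (fun t : Fin m => c ^ (t : ℕ)) := by
  ext i j
  simp only [diagonal_mul, mul_diagonal, Matrix.smul_apply, transpose_apply, weightedCycle,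
    of_apply, smul_eq_mul]
  split_ifs with h
  · rw [h, ← pow_eq_pow_mod _ hc, pow_succ]
    ring
  · simp

end WeightedCycle

noncomputable def twistedJacobi {m : ℕ} (a b : Fin m → ℝ) (z : ℂ) : Matrix (Fin m) (Fin m) ℂ :=
  laurentPencil (diagonal fun t => (a t : ℂ)) (weightedCycle fun t => (b t : ℂ))
    (weightedCycle fun t => (b t : ℂ))ᵀ z

theorem trace_pow_twistedJacobi_eq {m k : ℕ} (hk : k < m) (a b : Fin m → ℝ) {z w : ℂ}
    (hz : z ≠ 0) (hw : w ≠ 0) :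
    trace (twistedJacobi a b z ^ k) = trace (twistedJacobi a b w ^ k) := by
  have hζ := Complex.isPrimitiveRoot_exp m (by omega)
  exact trace_pow_laurentPencil_eq hζ hk (isUnit_diagonal_pow (hζ.ne_zero (by omega)) _)
    (commute_diagonal _ _) (diagonal_pow_mul_weightedCycle hζ.pow_eq_one _)
    (diagonal_pow_mul_transpose_weightedCycle hζ.pow_eq_one _) hz hw

theorem diagonal_pow_mul_periodicJacobi {m : ℕ} (hm : 3 ≤ m) (a b : Fin m → ℝ) {θ : ℝ} {w : ℂ}
    (hw : w ^ m = Complex.exp (Complex.I * θ)) :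
    diagonal (fun t : Fin m => w ^ (t : ℕ)) * periodicJacobi m a b θ
      = twistedJacobi a b w⁻¹ * diagonal (fun t : Fin m => w ^ (t : ℕ)) := by
  have hw0 : w ≠ 0 := by
    rintro rfl
    rw [zero_pow (by omega)] at hw
    exact Complex.exp_ne_zero _ hw.symm
  have hwinv : Complex.exp (-(Complex.I * θ)) = (w ^ m)⁻¹ := by rw [Complex.exp_neg, hw]
  have hpow : w ^ m = w ^ (m - 1) * w := by rw [← pow_succ, Nat.sub_add_cancel (by omega)]
  have hlast : ∀ t : Fin m, (t : ℕ) = m - 1 → ∀ h, b ⟨m - 1, h⟩ = b t :=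
    fun t ht _ => congrArg b (Fin.ext ht.symm)
  have hsucc : ∀ t : Fin m, ((t : ℕ) + 1) % m = if (t : ℕ) + 1 = m then 0 else (t : ℕ) + 1 :=
    fun t => by
      split_ifs with h
      · simp [h]
      · exact Nat.mod_eq_of_lt (by omega)
  ext i j
  simp only [diagonal_mul, mul_diagonal, periodicJacobi, twistedJacobi, laurentPencil,
    weightedCycle, Matrix.add_apply, Matrix.smul_apply, transpose_apply, diagonal_apply, of_apply,
    smul_eq_mul, hsucc, ← hw, hwinv, Fin.ext_iff, inv_inv]
  split_ifs <;> try omega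
  all_goals try simp only [mul_zero, zero_mul, add_zero, zero_add]
  -- nonzero entries: the diagonal, the two off-diagonals, and the two corners carrying `w ^ m`
  all_goals first
    | (have hij : (i : ℕ) = j := by omega
       obtain rfl := Fin.ext hij; ring)
    | (rw [show (j : ℕ) = i + 1 by omega, pow_succ]; field_simp)
    | (rw [show (i : ℕ) = j + 1 by omega, pow_succ]; ring)
    | (rw [hlast j (by omega), show (i : ℕ) = 0 by omega, show (j : ℕ) = m - 1 by omega, hpow]
       ring)
    | (rw [hlast i (by omega), show (j : ℕ) = 0 by omega, show (i : ℕ) = m - 1 by omega, hpow]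
       field_simp)

theorem trace_pow_periodicJacobi_eq {m k : ℕ} (hm : 3 ≤ m) (a b : Fin m → ℝ) (hk : k < m)
    (θ : ℝ) : trace (periodicJacobi m a b θ ^ k) = trace (periodicJacobi m a b 0 ^ k) := by
  have hm0 : (m : ℂ) ≠ 0 := Nat.cast_ne_zero.2 (by omega)
  set w := Complex.exp (Complex.I * θ / m)
  have hw : w ^ m = Complex.exp (Complex.I * θ) := by
    rw [← Complex.exp_nat_mul]
    congr 1
    field_simp
  rw [trace_pow_eq_of_isUnit_mul_eq_mul (isUnit_diagonal_pow (Complex.exp_ne_zero _) _)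
      (diagonal_pow_mul_periodicJacobi hm a b hw) k,
    trace_pow_eq_of_isUnit_mul_eq_mul (isUnit_diagonal_pow one_ne_zero _)
      (diagonal_pow_mul_periodicJacobi hm a b (w := 1) (by simp)) k]
  exact trace_pow_twistedJacobi_eq hk a b (inv_ne_zero (Complex.exp_ne_zero _)) (by simp)

theorem trace_poly_periodicJacobi_phase_independent_general
    (m : ℕ) (hm : 3 ≤ m) (a b : Fin m → ℝ)
    (P : Polynomial ℝ) (hP : P.natDegree < m) :
    ∀ θ : ℝ,
      Matrix.trace (Polynomial.aeval (periodicJacobi m a b θ) P)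
        = Matrix.trace (Polynomial.aeval (periodicJacobi m a b 0) P) := fun θ =>
  trace_aeval_eq_of_trace_pow_eq fun _ hk =>
    trace_pow_periodicJacobi_eq hm a b (hk.trans_lt hP) θ

/-- For a polynomial `P` of degree `< m`, the trace of `P(A_θ)` is independent
of the phase `θ`. -/
theorem trace_poly_periodicJacobi_phase_independent
    (m : ℕ) (hm : 3 ≤ m) (a b : Fin m → ℝ) (hb : ∀ t, 0 < b t)
    (P : Polynomial ℝ) (hP : P.natDegree < m) :
    ∀ θ : ℝ,
      Matrix.trace (Polynomial.aeval (periodicJacobi m a b θ) P)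
        = Matrix.trace (Polynomial.aeval (periodicJacobi m a b 0) P) :=
  trace_poly_periodicJacobi_phase_independent_general m hm a b P hP
end
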